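/- arXiv:1909.10242 — 2 statements merged into one kernel-verified Lean document; each statement's English description precedes it below -/
import Mathlib

section
/- Let V be a finite set with Laplacian Δ and carré du champ Γ, and let u : V → ℝ. If x minimizes Δu over V and 1 + u(y) − u(x) ≥ 0 for all y with q(x,y) > 0, then ΔΔu(x) + 2Γ(u, Δu)(x) ≥ 0. -/
open Finset Real

/-- Graph Laplacian on a finite weighted graph. -/
noncomputable def glap {V : Type*} [Fintype V] (q : V → V → ℝ) (f : V → ℝ) (x : V) : ℝ :=
  ∑ y, q x y * (f y - f x)

/-- Carré du champ operator Γ(f,g). -/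
noncomputable def gGammaBil {V : Type*} [Fintype V] (q : V → V → ℝ) (f g : V → ℝ) (x : V) : ℝ :=
  (1 / 2) * ∑ y, q x y * (f y - f x) * (g y - g x)

/-- Carré du champ Γf = Γ(f,f). -/
noncomputable def gGamma {V : Type*} [Fintype V] (q : V → V → ℝ) (f : V → ℝ) (x : V) : ℝ :=
  gGammaBil q f f x

/-- Iterated carré du champ Γ₂f = (ΔΓf − 2Γ(f,Δf))/2. -/
noncomputable def gGammaTwo {V : Type*} [Fintype V] (q : V → V → ℝ) (f : V → ℝ) (x : V) : ℝ :=
  (glap q (gGamma q f) x - 2 * gGammaBil q f (glap q f) x) / 2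

section

variable {V : Type*} [Fintype V] (q : V → V → ℝ) (u g : V → ℝ) (x : V)

theorem glap_add_two_gGammaBil_eq_sum :
    glap q g x + 2 * gGammaBil q u g x = ∑ y, q x y * (g y - g x) * (1 + u y - u x) := by
  simp only [glap, gGammaBil, mul_sum, ← sum_add_distrib]
  exact sum_congr rfl fun y _ => by ring

variable {q u g x}

theorem glap_add_two_gGammaBil_nonneg_of_forall_le (hq : ∀ y, 0 ≤ q x y)
    (hmin : ∀ y, g x ≤ g y) (hgrad : ∀ y, 0 < q x y → 0 ≤ 1 + u y - u x) :
    0 ≤ glap q g x + 2 * gGammaBil q u g x := by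
  rw [glap_add_two_gGammaBil_eq_sum]
  refine sum_nonneg fun y _ => ?_
  rcases (hq y).eq_or_lt with hzero | hpos
  · simp [← hzero]
  · exact mul_nonneg (mul_nonneg hpos.le (sub_nonneg.2 (hmin y))) (hgrad y hpos)

end

theorem lap_lap_add_two_gamma_nonneg_general {V : Type*} [Fintype V] (q : V → V → ℝ)
    (hq : ∀ x y, 0 ≤ q x y) (u : V → ℝ) (x : V)
    (hmin : ∀ y, glap q u x ≤ glap q u y)
    (hgrad : ∀ y, 0 < q x y → 0 ≤ 1 + u y - u x) :
    0 ≤ glap q (glap q u) x + 2 * gGammaBil q u (glap q u) x :=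
  glap_add_two_gGammaBil_nonneg_of_forall_le (hq x) hmin hgrad

theorem lap_lap_add_two_gamma_nonneg {V : Type*} [Fintype V] (q : V → V → ℝ)
    (hq : ∀ x y, 0 ≤ q x y) (hdiag : ∀ x, q x x = 0) (u : V → ℝ) (x : V)
    (hmin : ∀ y, glap q u x ≤ glap q u y)
    (hgrad : ∀ y, 0 < q x y → 0 ≤ 1 + u y - u x) :
    0 ≤ glap q (glap q u) x + 2 * gGammaBil q u (glap q u) x :=
  lap_lap_add_two_gamma_nonneg_general q hq u x hmin hgrad
end

section
/- Let (V,q) be a finite weighted graph satisfying CD(0,n) for some finite n > 0, and let (u_t)_{t≥0} solve ∂_t u_t = Δu_t + Γu_t with ‖Γu_0‖_∞ ≤ q_min/2. Then for all t > 0 and all x ∈ V, −Δu_t(x) ≤ n/(2t). -/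
open Finset Real

section aux
variable {V : Type*} [Fintype V] (q : V → V → ℝ)

lemma glap_add (a b : V → ℝ) (x : V) :
    glap q (fun z => a z + b z) x = glap q a x + glap q b x := by
  unfold glap
  rw [← Finset.sum_add_distrib]
  exact Finset.sum_congr rfl fun y _ => by ring

lemma glap_neg (a : V → ℝ) (x : V) :
    glap q (fun z => -a z) x = -glap q a x := by
  unfold glap
  rw [← Finset.sum_neg_distrib]
  exact Finset.sum_congr rfl fun y _ => by ring

lemma glap_const_mul (c : ℝ) (a : V → ℝ) (x : V) :
    glap q (fun z => c * a z) x = c * glap q a x := by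
  unfold glap
  rw [Finset.mul_sum]
  exact Finset.sum_congr rfl fun y _ => by ring

lemma gGammaBil_add_right (f a b : V → ℝ) (x : V) :
    gGammaBil q f (fun z => a z + b z) x = gGammaBil q f a x + gGammaBil q f b x := by
  unfold gGammaBil
  rw [← mul_add, ← Finset.sum_add_distrib]
  congr 1
  exact Finset.sum_congr rfl fun y _ => by ring

lemma gGammaBil_neg_right (f a : V → ℝ) (x : V) :
    gGammaBil q f (fun z => -a z) x = -gGammaBil q f a x := by
  unfold gGammaBil
  rw [← mul_neg, ← Finset.sum_neg_distrib]
  congr 1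
  exact Finset.sum_congr rfl fun y _ => by ring

lemma gGammaBil_const_mul_right (c : ℝ) (f a : V → ℝ) (x : V) :
    gGammaBil q f (fun z => c * a z) x = c * gGammaBil q f a x := by
  simp only [gGammaBil, Finset.mul_sum]
  exact Finset.sum_congr rfl fun y _ => by ring

/-- merging Δ W + 2Γ(f,W) into one sum -/
lemma glap_add_two_bil (f W : V → ℝ) (x : V) :
    glap q W x + 2 * gGammaBil q f W x
      = ∑ y, q x y * (W y - W x) * (1 + (f y - f x)) := by
  unfold glap gGammaBil
  have h2 : ∀ S : ℝ, 2 * ((1/2 : ℝ) * S) = S := fun S => by ring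
  rw [h2, ← Finset.sum_add_distrib]
  exact Finset.sum_congr rfl fun y _ => by ring

lemma gGamma_nonneg (hq : ∀ x y, 0 ≤ q x y) (f : V → ℝ) (x : V) : 0 ≤ gGamma q f x := by
  unfold gGamma gGammaBil
  apply mul_nonneg (by norm_num)
  exact Finset.sum_nonneg fun y _ => by nlinarith [hq x y, sq_nonneg (f y - f x)]

lemma gGamma_single (hq : ∀ x y, 0 ≤ q x y) (f : V → ℝ) (x y : V) :
    q x y * (f y - f x) ^ 2 / 2 ≤ gGamma q f x := by
  unfold gGamma gGammaBil
  have h := Finset.single_le_sum (f := fun z => q x z * (f z - f x) * (f z - f x))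
    (fun z _ => by nlinarith [hq x z, sq_nonneg (f z - f x)]) (Finset.mem_univ y)
  nlinarith [h]

/-- 2Γ(f, Δf) = ΔΓf − 2Γ₂f, i.e. the definition of Γ₂ rearranged, plus bilinearity:
   2Γ(f, Δf + Γf) = ΔΓf − 2Γ₂f + 2Γ(f, Γf). -/
lemma two_bil_flow (f : V → ℝ) (x : V) :
    2 * gGammaBil q f (fun z => glap q f z + gGamma q f z) x
      = glap q (gGamma q f) x - 2 * gGammaTwo q f x + 2 * gGammaBil q f (gGamma q f) x := by
  rw [gGammaBil_add_right]
  unfold gGammaTwo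
  ring

end aux

open Filter Topology in
lemma maxGronwall {ι : Type*} [Fintype ι] [Nonempty ι]
    {f f' : ι → ℝ → ℝ} {a b δ K ε : ℝ}
    (hd : ∀ i, ∀ t ∈ Set.Icc a b, HasDerivWithinAt (f i) (f' i t) (Set.Ici a) t)
    (hainit : (Finset.univ.sup' Finset.univ_nonempty fun i => f i a) ≤ δ)
    (bound : ∀ t ∈ Set.Ico a b, ∀ i,
      f i t = (Finset.univ.sup' Finset.univ_nonempty fun j => f j t) →
      f' i t ≤ K * (Finset.univ.sup' Finset.univ_nonempty fun j => f j t) + ε) :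
    ∀ t ∈ Set.Icc a b,
      (Finset.univ.sup' Finset.univ_nonempty fun i => f i t) ≤ gronwallBound δ K ε (t - a) := by
  set ψ : ℝ → ℝ := fun t => Finset.univ.sup' Finset.univ_nonempty fun i => f i t with hψdef
  have hcontW : ∀ i, ∀ t ∈ Set.Icc a b, ContinuousWithinAt (f i) (Set.Ici a) t :=
    fun i t ht => (hd i t ht).continuousWithinAt
  have hcont : ContinuousOn ψ (Set.Icc a b) :=
    ContinuousOn.finset_sup'_apply Finset.univ_nonempty
      (fun i _ => fun t ht => (hcontW i t ht).mono Set.Icc_subset_Ici_self)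
  refine le_gronwallBound_of_liminf_deriv_right_le (f' := fun t => K * ψ t + ε) hcont ?_ hainit
    (fun t ht => le_refl _)
  intro t ht r hr
  have hta : a ≤ t := ht.1
  have htb : t < b := ht.2
  -- pigeonhole: some i achieves the max frequently to the right of t
  have hex : ∀ z : ℝ, ∃ i, ψ z = f i z := fun z => by
    obtain ⟨i, _, hi⟩ := Finset.exists_mem_eq_sup' Finset.univ_nonempty (fun i => f i z)
    exact ⟨i, hi⟩
  have hfreq : ∃ i, ∃ᶠ z in 𝓝[>] t, ψ z = f i z := by
    by_contra h
    push_neg at h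
    have hall : ∀ᶠ z in 𝓝[>] t, ∀ i, ¬ ψ z = f i z := eventually_all.2 h
    obtain ⟨z, hz⟩ := hall.exists
    obtain ⟨i, hi⟩ := hex z
    exact hz i hi
  obtain ⟨i, hfreq⟩ := hfreq
  have hmono : 𝓝[>] t ≤ 𝓝[Set.Ici a \ {t}] t :=
    nhdsWithin_mono t (fun z hz => ⟨le_trans hta (le_of_lt hz), ne_of_gt hz⟩)
  have hmono' : 𝓝[>] t ≤ 𝓝[Set.Ici a] t :=
    nhdsWithin_mono t (fun z hz => le_trans hta (le_of_lt hz))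
  have htmem : t ∈ Set.Icc a b := ⟨hta, htb.le⟩
  have h1 : Tendsto (f i) (𝓝[>] t) (𝓝 (f i t)) := (hcontW i t htmem).mono_left hmono'
  have h2 : Tendsto ψ (𝓝[>] t) (𝓝 (ψ t)) := by
    have : ContinuousWithinAt ψ (Set.Ici a) t :=
      ContinuousWithinAt.finset_sup'_apply Finset.univ_nonempty (fun j _ => hcontW j t htmem)
    exact this.mono_left hmono'
  have hteq : f i t = ψ t := (tendsto_nhds_unique_of_frequently_eq h1 h2 (hfreq.mono fun z hz => hz.symm))
  have hs : Tendsto (slope (f i) t) (𝓝[>] t) (𝓝 (f' i t)) :=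
    (hasDerivWithinAt_iff_tendsto_slope.1 (hd i t htmem)).mono_left hmono
  have hlt : f' i t < r := lt_of_le_of_lt (bound t ht i hteq) hr
  have hev : ∀ᶠ z in 𝓝[>] t, slope (f i) t z < r := hs.eventually_lt_const hlt
  have hmem : ∀ᶠ z in 𝓝[>] t, t < z := eventually_mem_nhdsWithin
  refine (hfreq.and_eventually (hev.and hmem)).mono ?_
  rintro z ⟨hze, hslope, hzt⟩
  have hle : (z - t)⁻¹ * (ψ z - ψ t) ≤ slope (f i) t z := by
    rw [slope_def_field, div_eq_inv_mul]
    have hinv : 0 ≤ (z - t)⁻¹ := inv_nonneg.2 (by linarith)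
    have : ψ z - ψ t ≤ f i z - f i t := by
      rw [hze, hteq]
    exact mul_le_mul_of_nonneg_left this hinv
  exact lt_of_le_of_lt hle hslope

section deriv
variable {V : Type*} [Fintype V] (q : V → V → ℝ)

lemma hasDeriv_glap {u : ℝ → V → ℝ} {du : V → ℝ} {t : ℝ}
    (h : ∀ x, HasDerivWithinAt (fun s => u s x) (du x) (Set.Ici 0) t) (x : V) :
    HasDerivWithinAt (fun s => glap q (u s) x) (glap q du x) (Set.Ici 0) t := by
  unfold glap
  exact HasDerivWithinAt.fun_sum fun y _ => ((h y).sub (h x)).const_mul (q x y)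

lemma hasDeriv_gGamma {u : ℝ → V → ℝ} {du : V → ℝ} {t : ℝ}
    (h : ∀ x, HasDerivWithinAt (fun s => u s x) (du x) (Set.Ici 0) t) (x : V) :
    HasDerivWithinAt (fun s => gGamma q (u s) x) (2 * gGammaBil q (u t) du x) (Set.Ici 0) t := by
  have H : HasDerivWithinAt (fun s => gGamma q (u s) x)
      ((1/2 : ℝ) * ∑ y, (q x y * (du y - du x) * (u t y - u t x)
        + q x y * (u t y - u t x) * (du y - du x))) (Set.Ici 0) t := by
    unfold gGamma gGammaBil
    exact (HasDerivWithinAt.fun_sum fun y _ =>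
      (((h y).sub (h x)).const_mul (q x y)).mul ((h y).sub (h x))).const_mul (1/2)
  convert H using 1
  simp only [gGammaBil, Finset.mul_sum]
  exact Finset.sum_congr rfl fun y _ => by ring

end deriv

lemma term_bound {a Wx Wy s c qmin : ℝ} (ha : 0 ≤ a) (hmin : 0 < a → qmin ≤ a)
    (hq0 : 0 ≤ qmin) (hWy0 : 0 ≤ Wy) (hWyx : Wy ≤ Wx) (hxmin : qmin / 2 ≤ Wx) (hxc : Wx ≤ c)
    (hgrad : a * s ^ 2 / 2 ≤ Wx) :
    a * (Wy - Wx) * (1 + s) ≤ c * (Wx - qmin / 2) := by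
  have hc0 : 0 ≤ c := by linarith
  have hRHS : 0 ≤ c * (Wx - qmin / 2) := mul_nonneg hc0 (by linarith)
  rcases eq_or_lt_of_le ha with h | hapos
  · rw [← h]; simpa using hRHS
  rcases le_or_gt 0 (1 + s) with hs1 | hs1
  · have : a * (Wy - Wx) * (1 + s) ≤ 0 := by
      apply mul_nonpos_of_nonpos_of_nonneg _ hs1
      nlinarith
    linarith
  · have hqa := hmin hapos
    have hs : s < -1 := by linarith
    have hA : 0 ≤ a * (-1 - s) := mul_nonneg ha (by linarith)
    have h2 : a * (-1 - s) * 2 ≤ a * (-1 - s) * (1 - s) :=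
      mul_le_mul_of_nonneg_left (by linarith) hA
    have h1 : a * (-1 - s) * (1 - s) = a * s ^ 2 - a := by ring
    have h3 : a * (-1 - s) ≤ Wx - qmin / 2 := by nlinarith
    have h4 : a * (Wy - Wx) * (1 + s) = (Wx - Wy) * (a * (-1 - s)) := by ring
    rw [h4]
    calc (Wx - Wy) * (a * (-1 - s)) ≤ Wx * (a * (-1 - s)) :=
          mul_le_mul_of_nonneg_right (by linarith) hA
      _ ≤ c * (a * (-1 - s)) := mul_le_mul_of_nonneg_right hxc hA
      _ ≤ c * (Wx - qmin / 2) := mul_le_mul_of_nonneg_left h3 hc0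

lemma gradient_bound {V : Type*} [Fintype V] (q : V → V → ℝ)
    (hq : ∀ x y, 0 ≤ q x y) (qmin n : ℝ) (hn : 0 < n)
    (hqmin_pos : 0 < qmin) (hqmin : ∀ x y, 0 < q x y → qmin ≤ q x y)
    (hCD : ∀ f : V → ℝ, ∀ x, (1 / n) * (glap q f x) ^ 2 ≤ gGammaTwo q f x)
    (u : ℝ → V → ℝ)
    (hu : ∀ t ∈ Set.Ici (0 : ℝ), ∀ x, HasDerivWithinAt (fun s => u s x)
      (glap q (u t) x + gGamma q (u t) x) (Set.Ici 0) t)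
    (h0 : ∀ x, gGamma q (u 0) x ≤ qmin / 2) :
    ∀ t, 0 ≤ t → ∀ x, gGamma q (u t) x ≤ qmin / 2 := by
  by_contra hcon
  push_neg at hcon
  obtain ⟨t₀, ht₀, x₀, hx₀⟩ := hcon
  haveI : Nonempty V := ⟨x₀⟩
  set φ : ℝ → ℝ := fun t => Finset.univ.sup' Finset.univ_nonempty fun x => gGamma q (u t) x
    with hφdef
  have hφt₀ : qmin / 2 < φ t₀ :=
    lt_of_lt_of_le hx₀ (Finset.le_sup' _ (Finset.mem_univ x₀))
  set c : ℝ := (qmin / 2 + φ t₀) / 2 with hc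
  have hc1 : qmin / 2 < c := by rw [hc]; linarith
  have hc2 : c < φ t₀ := by rw [hc]; linarith
  have hcpos : 0 < c := by linarith
  have hder : ∀ t, 0 ≤ t → ∀ x, HasDerivWithinAt (fun s => gGamma q (u s) x)
      (2 * gGammaBil q (u t) (fun z => glap q (u t) z + gGamma q (u t) z) x) (Set.Ici 0) t :=
    fun t ht x => hasDeriv_gGamma q (fun y => hu t ht y) x
  have hφcont : ContinuousOn φ (Set.Icc 0 t₀) :=
    ContinuousOn.finset_sup'_apply Finset.univ_nonempty fun x _ => fun t ht =>
      ((hder t ht.1 x).continuousWithinAt).mono Set.Icc_subset_Ici_self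
  set S : Set ℝ := Set.Icc 0 t₀ ∩ φ ⁻¹' Set.Ici c with hSdef
  have hS_closed : IsClosed S :=
    hφcont.preimage_isClosed_of_isClosed isClosed_Icc isClosed_Ici
  have hSne : S.Nonempty := ⟨t₀, ⟨⟨ht₀, le_refl _⟩, hc2.le⟩⟩
  have hSbdd : BddBelow S := ⟨0, fun s hs => hs.1.1⟩
  set τ : ℝ := sInf S with hτdef
  have hτS : τ ∈ S := hS_closed.csInf_mem hSne hSbdd
  have hτ0 : 0 ≤ τ := hτS.1.1
  have hτc : c ≤ φ τ := hτS.2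
  have hIco : ∀ s ∈ Set.Ico (0:ℝ) τ, φ s < c := by
    intro s hs
    by_contra hge
    push_neg at hge
    have hsS : s ∈ S := ⟨⟨hs.1, le_trans hs.2.le hτS.1.2⟩, hge⟩
    exact absurd (csInf_le hSbdd hsS) (not_le.2 hs.2)
  -- Gronwall on Option V
  set g : Option V → ℝ → ℝ := fun i t => i.elim (qmin / 2) (fun x => gGamma q (u t) x) with hgdef
  set g' : Option V → ℝ → ℝ := fun i t => i.elim 0
    (fun x => 2 * gGammaBil q (u t) (fun z => glap q (u t) z + gGamma q (u t) z) x) with hg'def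
  set ψ : ℝ → ℝ := fun t => Finset.univ.sup' Finset.univ_nonempty fun i => g i t with hψdef
  have hψ_const : ∀ t, qmin / 2 ≤ ψ t := fun t =>
    Finset.le_sup' (f := fun i => g i t) (Finset.mem_univ none)
  have hψ_ge : ∀ t x, gGamma q (u t) x ≤ ψ t := fun t x =>
    Finset.le_sup' (f := fun i => g i t) (Finset.mem_univ (some x))
  set K : ℝ := (Fintype.card V : ℝ) * c with hKdef
  have hKpos : 0 < K := by
    apply mul_pos _ hcpos
    exact_mod_cast Fintype.card_pos
  have hgron := maxGronwall (f := g) (f' := g') (a := 0) (b := τ) (δ := qmin / 2)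
    (K := K) (ε := -(K * (qmin / 2)))
    (fun i t ht => by
      cases i with
      | none => exact hasDerivWithinAt_const t _ _
      | some x => exact hder t ht.1 x)
    (Finset.sup'_le _ _ fun i _ => by
      cases i with
      | none => exact le_refl _
      | some x => exact h0 x)
    (by
      intro t ht i hieq
      have hψt_le_c : ψ t ≤ c := by
        apply Finset.sup'_le
        intro j _
        cases j with
        | none => exact hc1.le
        | some y =>
          calc gGamma q (u t) y ≤ φ t := Finset.le_sup' _ (Finset.mem_univ y)
            _ ≤ c := (hIco t ht).le
      cases i with
      | none =>
        show (0:ℝ) ≤ K * ψ t + -(K * (qmin / 2))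
        have := hψ_const t
        nlinarith
      | some x =>
        show 2 * gGammaBil q (u t) (fun z => glap q (u t) z + gGamma q (u t) z) x
          ≤ K * ψ t + -(K * (qmin / 2))
        have hWx : gGamma q (u t) x = ψ t := hieq
        have hG2 : 0 ≤ gGammaTwo q (u t) x := by
          refine le_trans ?_ (hCD (u t) x)
          positivity
        rw [two_bil_flow]
        have hle1 : glap q (gGamma q (u t)) x - 2 * gGammaTwo q (u t) x
            + 2 * gGammaBil q (u t) (gGamma q (u t)) x
            ≤ glap q (gGamma q (u t)) x + 2 * gGammaBil q (u t) (gGamma q (u t)) x := by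
          linarith
        refine le_trans hle1 ?_
        rw [glap_add_two_bil]
        have hterm : ∀ y : V, q x y * (gGamma q (u t) y - gGamma q (u t) x)
            * (1 + (u t y - u t x)) ≤ c * (gGamma q (u t) x - qmin / 2) := by
          intro y
          apply term_bound (hq x y) (fun h => hqmin x y h) hqmin_pos.le
            (gGamma_nonneg q hq (u t) y)
            (by rw [hWx]; exact hψ_ge t y)
            (by rw [hWx]; exact hψ_const t)
            (by rw [hWx]; exact hψt_le_c)
            (gGamma_single q hq (u t) x y)
        calc (∑ y, q x y * (gGamma q (u t) y - gGamma q (u t) x) * (1 + (u t y - u t x)))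
            ≤ ∑ _y : V, c * (gGamma q (u t) x - qmin / 2) :=
              Finset.sum_le_sum fun y _ => hterm y
          _ = (Fintype.card V : ℝ) * (c * (gGamma q (u t) x - qmin / 2)) := by
              rw [Finset.sum_const, Finset.card_univ, nsmul_eq_mul]
          _ = K * ψ t + -(K * (qmin / 2)) := by rw [← hWx, hKdef]; ring)
  have hfinal := hgron τ ⟨hτ0, le_refl _⟩
  have hgb : gronwallBound (qmin / 2) K (-(K * (qmin / 2))) (τ - 0) = qmin / 2 := by
    rw [gronwallBound_of_K_ne_0 (ne_of_gt hKpos)]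
    field_simp
    ring
  rw [hgb] at hfinal
  have : φ τ ≤ ψ τ := Finset.sup'_le _ _ fun y _ => hψ_ge τ y
  linarith

/-- Discrete Li-Yau inequality under CD(0,n) for the modified heat equation ∂ₜu = Δu + Γu. -/
theorem li_yau_CD_zero_n {V : Type*} [Fintype V] (q : V → V → ℝ)
    (hq : ∀ x y, 0 ≤ q x y) (hdiag : ∀ x, q x x = 0) (qmin n : ℝ) (hn : 0 < n)
    (hqmin_pos : 0 < qmin) (hqmin : ∀ x y, 0 < q x y → qmin ≤ q x y)
    (hCD : ∀ f : V → ℝ, ∀ x, (1 / n) * (glap q f x) ^ 2 ≤ gGammaTwo q f x)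
    (u : ℝ → V → ℝ)
    (hu : ∀ t ∈ Set.Ici (0 : ℝ), ∀ x, HasDerivWithinAt (fun s => u s x)
      (glap q (u t) x + gGamma q (u t) x) (Set.Ici 0) t)
    (h0 : (⨆ x, gGamma q (u 0) x) ≤ qmin / 2) :
    ∀ t : ℝ, 0 < t → ∀ x, -glap q (u t) x ≤ n / (2 * t) := by
  intro T hT x₁
  haveI : Nonempty V := ⟨x₁⟩
  have h0' : ∀ x, gGamma q (u 0) x ≤ qmin / 2 := fun x =>
    le_trans (le_ciSup (Set.Finite.bddAbove (Set.finite_range _)) x) h0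
  have hgrad : ∀ t, 0 ≤ t → ∀ x, gGamma q (u t) x ≤ qmin / 2 :=
    gradient_bound q hq qmin n hn hqmin_pos hqmin hCD u hu h0'
  -- family over Option V : F (some x) t = t * (-Δu_t x), F none = n/2
  set g : Option V → ℝ → ℝ := fun i t => i.elim (n / 2) (fun x => t * (-glap q (u t) x))
    with hgdef
  set g' : Option V → ℝ → ℝ := fun i t => i.elim 0
    (fun x => 1 * (-glap q (u t) x)
      + t * (-glap q (fun z => glap q (u t) z + gGamma q (u t) z) x)) with hg'def
  set ψ : ℝ → ℝ := fun t => Finset.univ.sup' Finset.univ_nonempty fun i => g i t with hψdef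
  have hψ_const : ∀ t, n / 2 ≤ ψ t := fun t =>
    Finset.le_sup' (f := fun i => g i t) (Finset.mem_univ none)
  have hψ_ge : ∀ t x, t * (-glap q (u t) x) ≤ ψ t := fun t x =>
    Finset.le_sup' (f := fun i => g i t) (Finset.mem_univ (some x))
  have hgron := maxGronwall (f := g) (f' := g') (a := 0) (b := T) (δ := n / 2)
    (K := 0) (ε := 0)
    (fun i t ht => by
      cases i with
      | none => exact hasDerivWithinAt_const t _ _
      | some x =>
        exact (hasDerivWithinAt_id t _).mul ((hasDeriv_glap q (hu t ht.1) x).neg))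
    (Finset.sup'_le _ _ fun i _ => by
      cases i with
      | none => exact le_refl _
      | some x =>
        show (0:ℝ) * -glap q (u 0) x ≤ n / 2
        rw [zero_mul]
        positivity)
    (by
      intro t ht i hieq
      cases i with
      | none => show (0:ℝ) ≤ 0 * ψ t + 0; simp
      | some x =>
        show 1 * (-glap q (u t) x)
            + t * (-glap q (fun z => glap q (u t) z + gGamma q (u t) z) x) ≤ 0 * ψ t + 0
        set gx : ℝ := -glap q (u t) x with hgx
        have hFx : t * gx = ψ t := hieq
        have hψn : n / 2 ≤ ψ t := hψ_const t
        have ht0 : 0 ≤ t := ht.1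
        have htpos : 0 < t := by
          rcases eq_or_lt_of_le ht0 with h | h
          · exfalso
            rw [← h] at hFx hψn
            simp at hFx
            linarith
          · exact h
        -- identity for the second derivative term
        have hid : -glap q (fun z => glap q (u t) z + gGamma q (u t) z) x
            = glap q (fun z => -glap q (u t) z) x
              + 2 * gGammaBil q (u t) (fun z => -glap q (u t) z) x
              - 2 * gGammaTwo q (u t) x := by
          rw [glap_add, glap_neg, gGammaBil_neg_right]
          have hdef : glap q (gGamma q (u t)) x
              = 2 * gGammaTwo q (u t) x + 2 * gGammaBil q (u t) (glap q (u t)) x := by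
            unfold gGammaTwo; ring
          rw [hdef]; ring
        -- t times the "drift" part equals the merged sum for F, which is ≤ 0 at the max
        have hsum : t * (glap q (fun z => -glap q (u t) z) x
              + 2 * gGammaBil q (u t) (fun z => -glap q (u t) z) x)
            = glap q (fun z => t * -glap q (u t) z) x
              + 2 * gGammaBil q (u t) (fun z => t * -glap q (u t) z) x := by
          rw [glap_const_mul, gGammaBil_const_mul_right]; ring
        have hsum2 : glap q (fun z => t * -glap q (u t) z) x
              + 2 * gGammaBil q (u t) (fun z => t * -glap q (u t) z) x
            = ∑ y, q x y * (t * -glap q (u t) y - t * -glap q (u t) x)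
                * (1 + (u t y - u t x)) := glap_add_two_bil q _ _ x
        have hsumle : (∑ y, q x y * (t * -glap q (u t) y - t * -glap q (u t) x)
                * (1 + (u t y - u t x))) ≤ 0 := by
          apply Finset.sum_nonpos
          intro y _
          rcases eq_or_lt_of_le (hq x y) with hq0 | hqpos
          · rw [← hq0]; simp
          · have hq1 : qmin ≤ q x y := hqmin x y hqpos
            have hsingle := gGamma_single q hq (u t) x y
            have hΓ : gGamma q (u t) x ≤ qmin / 2 := hgrad t ht0 x
            have hs2 : (u t y - u t x) ^ 2 ≤ 1 := by nlinarith
            have h1s : 0 ≤ 1 + (u t y - u t x) := by nlinarith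
            have hFle : t * -glap q (u t) y - t * -glap q (u t) x ≤ 0 := by
              have h := hψ_ge t y
              have h2 : t * -glap q (u t) x = ψ t := by rw [← hgx]; exact hFx
              linarith
            have : q x y * (t * -glap q (u t) y - t * -glap q (u t) x) ≤ 0 :=
              mul_nonpos_of_nonneg_of_nonpos hqpos.le hFle
            exact mul_nonpos_of_nonpos_of_nonneg this h1s
        have hCDx := hCD (u t) x
        have hG2 : (1 / n) * gx ^ 2 ≤ gGammaTwo q (u t) x := by
          rw [hgx, neg_sq]; exact hCDx
        have hgxpos : 0 < gx := by
          by_contra hng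
          push_neg at hng
          have : t * gx ≤ 0 := mul_nonpos_of_nonneg_of_nonpos htpos.le hng
          linarith
        -- assemble
        have : 1 * gx + t * (-glap q (fun z => glap q (u t) z + gGamma q (u t) z) x)
            ≤ gx - t * (2 * ((1 / n) * gx ^ 2)) := by
          rw [hid]
          have expand : t * (glap q (fun z => -glap q (u t) z) x
              + 2 * gGammaBil q (u t) (fun z => -glap q (u t) z) x
              - 2 * gGammaTwo q (u t) x)
            = t * (glap q (fun z => -glap q (u t) z) x
              + 2 * gGammaBil q (u t) (fun z => -glap q (u t) z) x)
              - t * (2 * gGammaTwo q (u t) x) := by ring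
          rw [expand, hsum, hsum2]
          have h2 : t * (2 * ((1 / n) * gx ^ 2)) ≤ t * (2 * gGammaTwo q (u t) x) := by
            apply mul_le_mul_of_nonneg_left _ ht0
            linarith
          linarith
        refine le_trans this ?_
        have hrw : n * (t * (2 * ((1 / n) * gx ^ 2))) = 2 * (t * gx) * gx := by
          field_simp
        have hngx : n ≤ 2 * (t * gx) := by linarith
        have h8 : n * gx ≤ 2 * (t * gx) * gx := mul_le_mul_of_nonneg_right hngx hgxpos.le
        have h9 : n * gx ≤ n * (t * (2 * ((1 / n) * gx ^ 2))) := by rw [hrw]; exact h8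
        have h10 : gx ≤ t * (2 * ((1 / n) * gx ^ 2)) := le_of_mul_le_mul_left h9 hn
        have hz : (0:ℝ) * ψ t + 0 = 0 := by ring
        rw [hz]
        linarith)
  have hfinal := hgron T ⟨hT.le, le_refl _⟩
  have hgb : gronwallBound (n / 2) 0 0 (T - 0) = n / 2 := by
    simp [gronwallBound_K0]
  rw [hgb] at hfinal
  have hx := le_trans (hψ_ge T x₁) hfinal
  rw [le_div_iff₀ (by positivity : (0:ℝ) < 2 * T)]
  linarith
end
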